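/- Let X be a Lefschetz complex over a ring R with unity, let 𝒱 be a multivector field on X with X invariant, and let 𝓜 = {M_r : r ∈ ℙ} be a Morse decomposition of X. If I ⊆ ℙ is convex (with respect to an admissible order ≤ on ℙ), then, writing I^≤ := {r : ∃ s ∈ I, r ≤ s}, I^< := I^≤ ∖ I, and N(J) := X ∖ Inv(X ∖ M(J)) for a lower set J, the pair (N(I^≤), N(I^<)) is an index pair for the Morse set M(I). -/

import Mathlib

/-!
For a down-set `J`, a cell lies in `Inv (X ∖ M(J))` iff some full solution through its dominant
cell has its ω-limit in a Morse set `M r` with `r ∉ J`: ω-limits are nonempty and lie in a single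
Morse set, and splicing the past of one solution with the future of another through a common cell
shows that the index of the ω-limit is below that of the α-limit. This set is `𝒱`-compatible and
backward invariant under `Π_𝒱` (the past needed for the splice exists because `X` is invariant),
hence also closed under cofaces, so its complement `N(J)` is closed and forward invariant, which
gives all index-pair axioms but the last. For that one, a cell of `N(I^≤) ∖ N(I^<)` lying in
`M v` has `v ∈ I^≤` and a full solution running from it into some `M t` with `t ∈ I`, so `t ≤ v`
and convexity puts `v` in `I`; hence the limits of a full solution in `N(I^≤) ∖ N(I^<)` lie in
Morse sets indexed by `I`.
-/

open scoped Classical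

namespace CMVF

variable {R : Type*} [Ring R] {X : Type*} [Fintype X]

/-- A Lefschetz complex over `R` with cells `X`. -/
structure Lefschetz (R : Type*) [Ring R] (X : Type*) [Fintype X] where
  dim : X → ℕ
  κ : X → X → R
  dim_facet : ∀ x y, κ x y ≠ 0 → dim x = dim y + 1
  κ_sq : ∀ x z, (∑ y : X, κ x y * κ y z) = 0

namespace Lefschetz

variable (L : Lefschetz R X)

/-- The face order `y ≤κ x` : the partial order generated by the facet relation. -/
def le (y x : X) : Prop := Relation.ReflTransGen (fun a b => L.κ b a ≠ 0) y x

/-- Closure of a set of cells: all faces of cells of `A`. -/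
def cls (A : Set X) : Set X := {z | ∃ a ∈ A, L.le z a}

/-- Closure of a single cell. -/
def clPt (x : X) : Set X := L.cls {x}

/-- The minimal open set containing `x`. -/
def opn (x : X) : Set X := {z | L.le x z}

/-- `A` is closed. -/
def Closed (A : Set X) : Prop := L.cls A = A

/-- The mouth of `A`. -/
def mo (A : Set X) : Set X := L.cls A \ A

/-- `A` is proper: its mouth is closed. -/
def Proper (A : Set X) : Prop := L.Closed (L.mo A)

/-- Relative closure within an ambient subcomplex `W`. -/
def clsIn (W A : Set X) : Set X := L.cls A ∩ W

/-- Relative mouth within an ambient subcomplex `W`. -/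
def moIn (W A : Set X) : Set X := L.clsIn W A \ A

/-- The boundary operator of the subcomplex determined by `A`
(`∂ x = ∑ y ∈ A, κ x y • y` for `x ∈ A`). -/
noncomputable def bd (A : Set X) : (X → R) →ₗ[R] (X → R) where
  toFun f := fun y => if y ∈ A then ∑ x : X, (if x ∈ A then f x * L.κ x y else 0) else 0
  map_add' f g := by
    funext y
    by_cases hy : y ∈ A
    · simp only [hy, if_true, Pi.add_apply]
      rw [← Finset.sum_add_distrib]
      refine Finset.sum_congr rfl fun x _ => ?_
      by_cases hx : x ∈ A <;> simp [hx, add_mul]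
    · simp [hy]
  map_smul' r f := by
    funext y
    by_cases hy : y ∈ A
    · simp only [hy, if_true, Pi.smul_apply, smul_eq_mul, RingHom.id_apply]
      rw [Finset.mul_sum]
      refine Finset.sum_congr rfl fun x _ => ?_
      by_cases hx : x ∈ A <;> simp [hx, mul_assoc]
    · simp [hy]

/-- The `n`-chains of the subcomplex determined by `A`. -/
noncomputable def chainGroup (A : Set X) (n : ℕ) : Submodule R (X → R) :=
  Submodule.span R {f | ∃ x ∈ A, L.dim x = n ∧ f = Pi.single x 1}

/-- The `n`-cycles of the subcomplex determined by `A`. -/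
noncomputable def cycles (A : Set X) (n : ℕ) : Submodule R (X → R) :=
  L.chainGroup A n ⊓ LinearMap.ker (L.bd A)

/-- The `n`-boundaries of the subcomplex determined by `A`. -/
noncomputable def boundaries (A : Set X) (n : ℕ) : Submodule R (X → R) :=
  (L.chainGroup A (n + 1)).map (L.bd A)

/-- The Lefschetz homology `H^κ_n(A)` of the subcomplex determined by `A`. -/
noncomputable def homology (A : Set X) (n : ℕ) : Type _ :=
  (L.cycles A n) ⧸ ((L.boundaries A n).comap (L.cycles A n).subtype)

noncomputable instance homologyAddCommGroup (A : Set X) (n : ℕ) :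
    AddCommGroup (L.homology A n) :=
  inferInstanceAs (AddCommGroup
    ((L.cycles A n) ⧸ ((L.boundaries A n).comap (L.cycles A n).subtype)))

noncomputable instance homologyModule (A : Set X) (n : ℕ) :
    Module R (L.homology A n) :=
  inferInstanceAs (Module R
    ((L.cycles A n) ⧸ ((L.boundaries A n).comap (L.cycles A n).subtype)))

/-- `A` is a zero space: its Lefschetz homology vanishes. -/
def HomologyZero (A : Set X) : Prop := ∀ n, Subsingleton (L.homology A n)

/-- The Poincaré polynomial `p_A(t) = ∑ rank H^κ_n(A) tⁿ`. -/
noncomputable def poincare (A : Set X) : Polynomial ℕ :=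
  ∑ n ∈ Finset.image L.dim Finset.univ,
    Polynomial.C (Module.finrank R (L.homology A n)) * Polynomial.X ^ n

/-- `V` is a multivector: proper, with a unique maximal element. -/
def IsMV (V : Set X) : Prop :=
  L.Proper V ∧ ∃! m, m ∈ V ∧ ∀ x ∈ V, L.le x m

/-- A regular multivector: one with vanishing Lefschetz homology. -/
def Regular (V : Set X) : Prop := L.HomologyZero V

end Lefschetz

/-- A combinatorial multivector field on a Lefschetz complex: a partition into multivectors. -/
structure MVField {R : Type*} [Ring R] {X : Type*} [Fintype X] (L : Lefschetz R X) where
  mvs : Set (Set X)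
  isMV : ∀ V ∈ mvs, L.IsMV V
  cover : ∀ x : X, ∃! V, V ∈ mvs ∧ x ∈ V

namespace MVField

variable {L : Lefschetz R X} (F : MVField L)

/-- `[x]` : the multivector containing `x`. -/
noncomputable def mclass (x : X) : Set X := (F.cover x).exists.choose

lemma mclass_spec (x : X) : F.mclass x ∈ F.mvs ∧ x ∈ F.mclass x :=
  (F.cover x).exists.choose_spec

/-- `x★` : the dominant cell of the multivector containing `x`. -/
noncomputable def star (x : X) : X :=
  ((F.isMV _ (F.mclass_spec x).1).2).exists.choose

/-- `[x]°` : the regular part of the multivector of `x`. -/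
noncomputable def regPart (x : X) : Set X :=
  if L.Regular (F.mclass x) then F.mclass x else F.mclass x \ {F.star x}

/-- The multivalued map `Π_𝒱`. -/
noncomputable def Pi (x : X) : Set X :=
  if x = F.star x then L.clPt x \ F.regPart x else {F.star x}

/-- The multivalued map of the multivector field restricted to the subcomplex `W`. -/
noncomputable def PiIn (W : Set X) (x : X) : Set X := F.Pi x ∩ W

/-- `φ : ℤ → X` is a full solution of the multivector field restricted to `W`. -/
def IsSolIn (W : Set X) (φ : ℤ → X) : Prop := ∀ i, φ (i + 1) ∈ F.PiIn W (φ i)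

/-- There is a full solution (of the field restricted to `W`) through `x` with values in `A`. -/
def FullSolThroughIn (W : Set X) (x : X) (A : Set X) : Prop :=
  ∃ φ : ℤ → X, F.IsSolIn W φ ∧ (∃ i, φ i = x) ∧ ∀ i, φ i ∈ A

/-- `A` is `𝒱`-compatible. -/
def Compat (A : Set X) : Prop := ∀ x ∈ A, F.mclass x ⊆ A

/-- `[A]⁻` : the maximal `𝒱`-compatible subset of `A`. -/
def lowerC (A : Set X) : Set X := {x ∈ A | F.mclass x ⊆ A}

/-- `[A]⁺` : the minimal `𝒱`-compatible superset of `A`. -/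
def upperC (A : Set X) : Set X := ⋃ x ∈ A, F.mclass x

/-- `Inv A`, the invariant part of `A`, computed in the subcomplex `W`. -/
def InvPartIn (W A : Set X) : Set X :=
  {x ∈ A | F.FullSolThroughIn W (F.star x) (F.lowerC A)}

/-- `A` is invariant (within the subcomplex `W`). -/
def InvariantIn (W A : Set X) : Prop := F.InvPartIn W A = A

/-- `φ` is a path (solution) on the integer interval `[a,b]`, within the subcomplex `W`. -/
def IsPathOnIn (W : Set X) (a b : ℤ) (φ : ℤ → X) : Prop :=
  ∀ i, a ≤ i → i < b → φ (i + 1) ∈ F.PiIn W (φ i)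

/-- `S` admits an internal tangency within the subcomplex `W`. -/
def HasInternalTangencyIn (W S : Set X) : Prop :=
  ∃ (a b : ℤ) (φ : ℤ → X), a ≤ b ∧ F.IsPathOnIn W a b φ ∧
    (∀ i, a ≤ i → i ≤ b → φ i ∈ L.clsIn W S) ∧ φ a ∈ S ∧ φ b ∈ S ∧
    ∃ i, a ≤ i ∧ i ≤ b ∧ φ i ∈ L.moIn W S

/-- `S` is an isolated invariant set within the subcomplex `W`. -/
def IsoInvIn (W S : Set X) : Prop :=
  F.InvariantIn W S ∧ ¬ F.HasInternalTangencyIn W S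

/-- `N` is a trapping region within the subcomplex `W`. -/
def TrappingIn (W N : Set X) : Prop :=
  N ⊆ W ∧ F.Compat N ∧ ∀ x ∈ N, F.PiIn W x ⊆ N

/-- `N` is a backward trapping region within the subcomplex `W`. -/
def BackTrappingIn (W N : Set X) : Prop :=
  N ⊆ W ∧ F.Compat N ∧ ∀ x ∈ W, ∀ y ∈ F.PiIn W x, y ∈ N → x ∈ N

/-- `A` is an attractor within the subcomplex `W`. -/
def AttractorIn (W A : Set X) : Prop :=
  ∃ N, F.TrappingIn W N ∧ A = F.InvPartIn W N

/-- `A` is a repeller within the subcomplex `W`. -/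
def RepellerIn (W A : Set X) : Prop :=
  ∃ N, F.BackTrappingIn W N ∧ A = F.InvPartIn W N

/-- The α-limit set of a full solution `φ`. -/
def alphaIn (W : Set X) (φ : ℤ → X) : Set X :=
  ⋂ k : ℕ, F.InvPartIn W (F.upperC (φ '' {i : ℤ | i ≤ -(k : ℤ)}))

/-- The ω-limit set of a full solution `φ`. -/
def omegaIn (W : Set X) (φ : ℤ → X) : Set X :=
  ⋂ k : ℕ, F.InvPartIn W (F.upperC (φ '' {i : ℤ | (k : ℤ) ≤ i}))

/-- `C(A',A)` : the set of cells lying on connections running from `A'` to `A`. -/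
def ConnIn (W A' A : Set X) : Set X :=
  {x | ∃ φ : ℤ → X, F.IsSolIn W φ ∧ (∃ i, φ i = F.star x) ∧
        F.alphaIn W φ ⊆ A' ∧ F.omegaIn W φ ⊆ A}

/-- `(A, Rp)` is an attractor-repeller pair in the subcomplex `W`. -/
def ARPairIn (W A Rp : Set X) : Prop :=
  F.AttractorIn W A ∧ F.RepellerIn W Rp ∧
    A = F.InvPartIn W (W \ Rp) ∧ Rp = F.InvPartIn W (W \ A)

/-- `M` is a Morse decomposition of the subcomplex `W`, with admissible order `le`. -/
def MorseDecompIn (W : Set X) {P : Type*} [Finite P] (le : P → P → Prop)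
    (M : P → Set X) : Prop :=
  IsPartialOrder P le ∧
  (∀ r, F.IsoInvIn W (M r)) ∧
  (∀ r r', r ≠ r' → Disjoint (M r) (M r')) ∧
  (∀ φ : ℤ → X, F.IsSolIn W φ →
    ∃ r r', le r r' ∧ F.alphaIn W φ ⊆ M r' ∧ F.omegaIn W φ ⊆ M r) ∧
  (∀ φ : ℤ → X, F.IsSolIn W φ → ∀ r,
    F.alphaIn W φ ⊆ M r → F.omegaIn W φ ⊆ M r → Set.range φ ⊆ M r)

/-- The Morse set `M(I)` of a family of sets indexed by `I ⊆ P`. -/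
def MorseSetIn (W : Set X) {P : Type*} (M : P → Set X) (I : Set P) : Set X :=
  ⋃ r ∈ I, ⋃ r' ∈ I, F.ConnIn W (M r') (M r)

/-- `(P₁, P₂)` is an index pair for the isolated invariant set `S`. -/
def IndexPair (S P₁ P₂ : Set X) : Prop :=
  L.Closed P₁ ∧ L.Closed P₂ ∧ P₂ ⊆ P₁ ∧
  (∀ x ∈ P₂, ∀ y ∈ F.Pi x, y ∈ P₁ → y ∈ P₂) ∧
  (∀ x ∈ P₁, (∃ y ∈ F.Pi x, y ∉ P₁) → x ∈ P₂) ∧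
  S = F.InvPartIn Set.univ (P₁ \ P₂)

/-- `x ⤳_A y` : there is a path of length at least two in `A` from `x★` to `y★`. -/
def PathConn (A : Set X) (x y : X) : Prop :=
  ∃ (a b : ℤ) (φ : ℤ → X), a < b ∧
    (∀ i, a ≤ i → i < b → φ (i + 1) ∈ F.Pi (φ i)) ∧
    (∀ i, a ≤ i → i ≤ b → φ i ∈ A) ∧ φ a = F.star x ∧ φ b = F.star y

/-- The chain recurrent set. -/
def CR : Set X := {x | F.PathConn Set.univ x x}

/-- `B` is a basic set: an equivalence class of mutual connectedness in `CR`. -/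
def IsBasicSet (B : Set X) : Prop :=
  ∃ x ∈ F.CR, B = {y ∈ F.CR | F.PathConn Set.univ x y ∧ F.PathConn Set.univ y x}

/-- The set `E_P` of cells of `P₁` all of whose forward solutions meet `P₂`. -/
def Ep (P₁ P₂ : Set X) : Set X :=
  {x ∈ P₁ | ∀ φ : ℕ → X, φ 0 = x → (∀ i, φ (i + 1) ∈ F.Pi (φ i)) → ∃ i, φ i ∈ P₂}

/-- The preorder `≤_𝒱` induced by the arrows of the multivector field. -/
def leV : X → X → Prop := Relation.ReflTransGen (fun y x => y ∈ F.Pi x)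

/-- The multivector field is acyclic: `≤_𝒱` is a partial order. -/
def Acyclic : Prop := ∀ x y, F.leV x y → F.leV y x → x = y


section Multivectors

theorem mem_mclass_self (x : X) : x ∈ F.mclass x := (F.mclass_spec x).2

theorem mclass_eq_of_mem {x y : X} (h : y ∈ F.mclass x) : F.mclass y = F.mclass x :=
  (F.cover y).unique (F.mclass_spec y) ⟨(F.mclass_spec x).1, h⟩

theorem mem_mclass_symm {x y : X} (h : y ∈ F.mclass x) : x ∈ F.mclass y :=
  F.mclass_eq_of_mem h ▸ F.mem_mclass_self x

theorem star_spec (x : X) : F.star x ∈ F.mclass x ∧ ∀ z ∈ F.mclass x, L.le z (F.star x) :=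
  ((F.isMV _ (F.mclass_spec x).1).2).exists.choose_spec

theorem star_eq_of_mem {x y : X} (h : y ∈ F.mclass x) : F.star y = F.star x := by
  refine ((F.isMV _ (F.mclass_spec y).1).2).unique (F.star_spec y) ?_
  rw [F.mclass_eq_of_mem h]
  exact F.star_spec x

theorem mclass_star (x : X) : F.mclass (F.star x) = F.mclass x :=
  F.mclass_eq_of_mem (F.star_spec x).1

theorem star_star (x : X) : F.star (F.star x) = F.star x :=
  F.star_eq_of_mem (F.star_spec x).1

theorem pi_of_ne_star {x : X} (h : x ≠ F.star x) : F.Pi x = {F.star x} := by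
  simp [MVField.Pi, h]

theorem mem_pi_star_of_le {b c : X} (hb : L.le b (F.star c)) (hbc : b ∉ F.mclass c) :
    b ∈ F.Pi (F.star c) := by
  rw [MVField.Pi, if_pos (F.star_star c).symm]
  refine ⟨⟨F.star c, rfl, hb⟩, fun hreg => hbc ?_⟩
  rw [← F.mclass_star c]
  unfold MVField.regPart at hreg
  split_ifs at hreg
  exacts [hreg, hreg.1]

end Multivectors

section Compatible

variable {F}

theorem Compat.mem_of_mem_mclass {A : Set X} (hA : F.Compat A) {x y : X} (hy : y ∈ A)
    (h : y ∈ F.mclass x) : x ∈ A :=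
  hA y hy (F.mem_mclass_symm h)

theorem Compat.diff {A B : Set X} (hA : F.Compat A) (hB : F.Compat B) : F.Compat (A \ B) :=
  fun x hx _ hy => ⟨hA x hx.1 hy, fun hyB => hx.2 (hB.mem_of_mem_mclass hyB hy)⟩

theorem Compat.lowerC_eq {A : Set X} (hA : F.Compat A) : F.lowerC A = A :=
  Set.ext fun x => ⟨And.left, fun h => ⟨h, hA x h⟩⟩

theorem Compat.upperC_subset {A B : Set X} (hB : F.Compat B) (h : A ⊆ B) : F.upperC A ⊆ B :=
  Set.iUnion₂_subset fun a ha => hB a (h ha)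

variable (F)

theorem compat_univ : F.Compat (Set.univ : Set X) := fun _ _ _ _ => trivial

theorem lowerC_subset (A : Set X) : F.lowerC A ⊆ A := fun _ h => h.1

theorem subset_upperC (A : Set X) : A ⊆ F.upperC A :=
  fun x hx => Set.mem_biUnion hx (F.mem_mclass_self x)

theorem upperC_mono {A B : Set X} (h : A ⊆ B) : F.upperC A ⊆ F.upperC B :=
  Set.biUnion_subset_biUnion_left h

theorem compat_upperC (A : Set X) : F.Compat (F.upperC A) := by
  intro x hx y hy
  obtain ⟨a, ha, hxa⟩ := Set.mem_iUnion₂.1 hx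
  exact Set.mem_biUnion ha (F.mclass_eq_of_mem hxa ▸ hy)

theorem invPartIn_subset (W A : Set X) : F.InvPartIn W A ⊆ A := fun _ h => h.1

theorem invPartIn_mono (W : Set X) {A B : Set X} (h : A ⊆ B) :
    F.InvPartIn W A ⊆ F.InvPartIn W B := by
  rintro x ⟨hxA, φ, hφ, hx, hval⟩
  exact ⟨h hxA, φ, hφ, hx, fun i => ⟨h (hval i).1, (hval i).2.trans h⟩⟩

theorem compat_invPartIn (W A : Set X) : F.Compat (F.InvPartIn W A) := by
  rintro x ⟨-, φ, hφ, ⟨i, hi⟩, hval⟩ y hy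
  have hstar : F.star x ∈ F.lowerC A := hi ▸ hval i
  exact ⟨hstar.2 (F.mclass_star x ▸ hy), φ, hφ, ⟨i, hi.trans (F.star_eq_of_mem hy).symm⟩, hval⟩

end Compatible

def splice {α : Type*} (φ : ℤ → α) (i₀ : ℤ) (ψ : ℤ → α) (j₀ : ℤ) : ℤ → α :=
  fun i => if i ≤ i₀ then φ i else ψ (i + (j₀ - i₀ - 1))

section Splice

variable {α : Type*} {φ ψ : ℤ → α} {i₀ j₀ i : ℤ}

theorem splice_of_le (h : i ≤ i₀) : splice φ i₀ ψ j₀ i = φ i :=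
  if_pos h

theorem splice_of_lt (h : i₀ < i) : splice φ i₀ ψ j₀ i = ψ (i + (j₀ - i₀ - 1)) :=
  if_neg (not_le.2 h)

end Splice

section Solutions

variable {F} {W : Set X} {φ ψ : ℤ → X}

theorem IsSolIn.mem (hφ : F.IsSolIn W φ) (i : ℤ) : φ i ∈ W := by
  simpa using (hφ (i - 1)).2

theorem IsSolIn.exists_eq_star (hφ : F.IsSolIn W φ) (i : ℤ) : ∃ j, φ j = F.star (φ i) := by
  by_cases h : φ i = F.star (φ i)
  · exact ⟨i, h⟩
  · exact ⟨i + 1, by simpa [F.pi_of_ne_star h] using (hφ i).1⟩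

theorem IsSolIn.exists_mem_piIn {y : X} (hφ : F.IsSolIn W φ) {j : ℤ} (hj : φ j = F.star y) :
    ∃ k, φ k ∈ F.PiIn W y := by
  by_cases h : y = F.star y
  · exact ⟨j + 1, by simpa [hj, ← h] using hφ j⟩
  · exact ⟨j, by rw [MVField.PiIn, F.pi_of_ne_star h, hj]; exact ⟨rfl, hj ▸ hφ.mem j⟩⟩

theorem isSolIn_splice {i₀ j₀ : ℤ} (hφ : ∀ i < i₀, φ (i + 1) ∈ F.PiIn W (φ i))
    (hψ : F.IsSolIn W ψ) (hstep : ψ j₀ ∈ F.PiIn W (φ i₀)) :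
    F.IsSolIn W (splice φ i₀ ψ j₀) := by
  intro i
  rcases lt_trichotomy i i₀ with h | rfl | h
  · rw [splice_of_le h.le, splice_of_le (by omega)]
    exact hφ i h
  · rw [splice_of_le le_rfl, splice_of_lt (by omega)]
    simpa using hstep
  · rw [splice_of_lt h, splice_of_lt (by omega), add_right_comm]
    exact hψ _

theorem IsSolIn.periodic (hφ : F.IsSolIn W φ) {a b : ℤ} (hab : a < b) (h : φ a = φ b) :
    F.IsSolIn W (fun j => φ (a + j % (b - a))) := by
  intro j
  beta_reduce
  have hp : 0 < b - a := by omega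
  have h₀ := Int.emod_nonneg j hp.ne'
  have h₁ := Int.emod_lt_of_pos j hp
  have hsucc : (j + 1) % (b - a) = (j % (b - a) + 1) % (b - a) := by
    rw [Int.add_emod j 1, Int.add_emod (j % (b - a)) 1, Int.emod_emod_of_dvd _ dvd_rfl]
  by_cases hc : j % (b - a) + 1 < b - a
  · rw [hsucc, Int.emod_eq_of_lt (by omega) hc, ← add_assoc]
    exact hφ _
  · have hend : a + j % (b - a) = b - 1 := by omega
    rw [hsucc, (by omega : j % (b - a) + 1 = b - a), Int.emod_self, add_zero, hend, h]
    simpa using hφ (b - 1)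

end Solutions

section Limits

variable {F} {W : Set X} {φ ψ : ℤ → X}

theorem omegaIn_subset_of_tails
    (h : ∀ k : ℕ, ∃ k' : ℕ, φ '' {i | (k' : ℤ) ≤ i} ⊆ ψ '' {i | (k : ℤ) ≤ i}) :
    F.omegaIn W φ ⊆ F.omegaIn W ψ := by
  intro x hx
  refine Set.mem_iInter.2 fun k => ?_
  obtain ⟨k', hk'⟩ := h k
  exact F.invPartIn_mono W (F.upperC_mono hk') (Set.mem_iInter.1 hx k')

theorem omegaIn_subset_of_shift {c d : ℤ} (h : ∀ i ≥ c, φ i = ψ (i + d)) :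
    F.omegaIn W φ ⊆ F.omegaIn W ψ := by
  refine omegaIn_subset_of_tails fun k => ⟨(max c (k - d)).toNat, ?_⟩
  rintro _ ⟨i, hi, rfl⟩
  have := Int.self_le_toNat (max c (k - d))
  simp only [Set.mem_ofPred_eq, max_le_iff] at hi this
  exact ⟨i + d, by simp only [Set.mem_ofPred_eq]; omega, (h i (by omega)).symm⟩

theorem omegaIn_eq_of_shift {c d : ℤ} (h : ∀ i ≥ c, φ i = ψ (i + d)) :
    F.omegaIn W φ = F.omegaIn W ψ :=
  (omegaIn_subset_of_shift h).antisymm <| omegaIn_subset_of_shift (c := c + d) (d := -d)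
    fun i hi => by rw [h (i + -d) (by omega), neg_add_cancel_right]

/-- The time-reversed sequence is in general not a solution, so only solution-free facts about
ω-limit sets transfer to α-limit sets. -/
theorem alphaIn_eq_omegaIn_neg : F.alphaIn W φ = F.omegaIn W (fun i => φ (-i)) := by
  refine Set.iInter_congr fun k => congrArg _ (congrArg _ ?_)
  ext x
  constructor
  · rintro ⟨i, hi, rfl⟩
    exact ⟨-i, by simp only [Set.mem_ofPred_eq] at hi ⊢; omega, by simp⟩
  · rintro ⟨i, hi, rfl⟩
    exact ⟨-i, by simp only [Set.mem_ofPred_eq] at hi ⊢; omega, rfl⟩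

theorem alphaIn_eq_of_eqOn {c : ℤ} (h : ∀ i ≤ c, φ i = ψ i) :
    F.alphaIn W φ = F.alphaIn W ψ := by
  rw [alphaIn_eq_omegaIn_neg, alphaIn_eq_omegaIn_neg]
  exact omegaIn_eq_of_shift (c := -c) (d := 0) fun i hi => by simpa using h (-i) (by omega)

theorem alphaIn_splice {i₀ j₀ : ℤ} : F.alphaIn W (splice φ i₀ ψ j₀) = F.alphaIn W φ :=
  alphaIn_eq_of_eqOn fun _ => splice_of_le

theorem omegaIn_splice {i₀ j₀ : ℤ} : F.omegaIn W (splice φ i₀ ψ j₀) = F.omegaIn W ψ :=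
  omegaIn_eq_of_shift (c := i₀ + 1) fun _ hi => splice_of_lt (by omega)

theorem omegaIn_subset_of_forall_mem {B : Set X} (hB : F.Compat B) (h : ∀ i, φ i ∈ B) :
    F.omegaIn W φ ⊆ B :=
  (Set.iInter_subset _ 0).trans <|
    (F.invPartIn_subset _ _).trans (hB.upperC_subset (by rintro _ ⟨i, -, rfl⟩; exact h i))

theorem alphaIn_subset_of_forall_mem {B : Set X} (hB : F.Compat B) (h : ∀ i, φ i ∈ B) :
    F.alphaIn W φ ⊆ B := by
  rw [alphaIn_eq_omegaIn_neg]
  exact omegaIn_subset_of_forall_mem hB fun i => h (-i)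

theorem IsSolIn.mem_invPartIn_of_loop (hφ : F.IsSolIn W φ) {a b : ℤ} (hab : a < b)
    (h : φ a = φ b) : φ a ∈ F.InvPartIn W (F.upperC (φ '' Set.Icc a b)) := by
  have hτ := hφ.periodic hab h
  have hval : ∀ j, φ (a + j % (b - a)) ∈ F.upperC (φ '' Set.Icc a b) := fun j =>
    F.subset_upperC _ ⟨_, ⟨by have := Int.emod_nonneg j (by omega : b - a ≠ 0); omega,
      by have := Int.emod_lt_of_pos j (by omega : 0 < b - a); omega⟩, rfl⟩
  obtain ⟨j, hj⟩ := hτ.exists_eq_star 0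
  refine ⟨by simpa using hval 0, _, hτ, ⟨j, by simpa using hj⟩, fun i => ?_⟩
  rw [(F.compat_upperC _).lowerC_eq]
  exact hval i

/-- A value taken infinitely often in forward time closes loops inside every tail. -/
theorem omegaIn_nonempty_of_loops
    (hloop : ∀ a b, a < b → φ a = φ b → φ a ∈ F.InvPartIn W (F.upperC (φ '' Set.Icc a b))) :
    (F.omegaIn W φ).Nonempty := by
  obtain ⟨z, hz⟩ := Finite.exists_infinite_fiber (fun n : ℕ => φ n)
  have hinf : {n : ℕ | φ n = z}.Infinite := Set.infinite_coe_iff.1 hz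
  refine ⟨z, Set.mem_iInter.2 fun k => ?_⟩
  obtain ⟨n₁, hn₁, hkn₁⟩ := hinf.exists_gt k
  obtain ⟨n₂, hn₂, hn₁₂⟩ := hinf.exists_gt n₁
  have hmem := hloop n₁ n₂ (by exact_mod_cast hn₁₂) (hn₁.trans hn₂.symm)
  rw [hn₁] at hmem
  refine F.invPartIn_mono W (F.upperC_mono (Set.image_mono fun i hi => ?_)) hmem
  simp only [Set.mem_Icc, Set.mem_ofPred_eq] at hi ⊢
  omega

theorem IsSolIn.omegaIn_nonempty (hφ : F.IsSolIn W φ) : (F.omegaIn W φ).Nonempty :=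
  omegaIn_nonempty_of_loops fun _ _ => hφ.mem_invPartIn_of_loop

theorem IsSolIn.alphaIn_nonempty (hφ : F.IsSolIn W φ) : (F.alphaIn W φ).Nonempty := by
  rw [alphaIn_eq_omegaIn_neg]
  refine omegaIn_nonempty_of_loops fun a b hab h => ?_
  have himage : (fun i => φ (-i)) '' Set.Icc a b = φ '' Set.Icc (-b) (-a) := by
    ext x
    constructor
    · rintro ⟨i, hi, rfl⟩
      exact ⟨-i, by simp only [Set.mem_Icc] at hi ⊢; omega, rfl⟩
    · rintro ⟨i, hi, rfl⟩
      exact ⟨-i, by simp only [Set.mem_Icc] at hi ⊢; omega, by simp⟩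
  rw [himage, h]
  exact hφ.mem_invPartIn_of_loop (neg_lt_neg hab) h.symm

end Limits

section Morse

variable {F} {P : Type*} {le : P → P → Prop} {M : P → Set X} {W : Set X}

theorem InvariantIn.subset_connIn {S : Set X} (hS : F.InvariantIn W S) : S ⊆ F.ConnIn W S S := by
  have hcompat : F.Compat S := hS ▸ F.compat_invPartIn W S
  intro z hz
  rw [← hS] at hz
  obtain ⟨-, φ, hφ, hz, hval⟩ := hz
  have hval' : ∀ i, φ i ∈ S := fun i => F.lowerC_subset S (hval i)
  exact ⟨φ, hφ, hz, alphaIn_subset_of_forall_mem hcompat hval',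
    omegaIn_subset_of_forall_mem hcompat hval'⟩

theorem mem_connIn_of_isSolIn {A' A : Set X} {φ : ℤ → X} (hφ : F.IsSolIn W φ)
    (hα : F.alphaIn W φ ⊆ A') (hω : F.omegaIn W φ ⊆ A) (i : ℤ) : φ i ∈ F.ConnIn W A' A :=
  ⟨φ, hφ, hφ.exists_eq_star i, hα, hω⟩

theorem compat_connIn (A' A : Set X) : F.Compat (F.ConnIn W A' A) := by
  rintro x ⟨φ, hφ, ⟨i, hi⟩, hα, hω⟩ y hy
  exact ⟨φ, hφ, ⟨i, hi.trans (F.star_eq_of_mem hy).symm⟩, hα, hω⟩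

theorem compat_morseSetIn (M : P → Set X) (J : Set P) : F.Compat (F.MorseSetIn W M J) := by
  intro x hx y hy
  simp only [MVField.MorseSetIn, Set.mem_iUnion] at hx ⊢
  obtain ⟨r, hr, r', hr', hc⟩ := hx
  exact ⟨r, hr, r', hr', compat_connIn _ _ x hc hy⟩

theorem morseSetIn_mono {J J' : Set P} (h : J ⊆ J') : F.MorseSetIn W M J ⊆ F.MorseSetIn W M J' :=
  Set.biUnion_mono h fun _ _ => Set.biUnion_mono h fun _ _ => subset_rfl

namespace MorseDecompIn

variable [Finite P]

theorem subset_morseSetIn (hM : F.MorseDecompIn W le M) {J : Set P} {r : P} (hr : r ∈ J) :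
    M r ⊆ F.MorseSetIn W M J := fun _ hz =>
  Set.mem_biUnion hr (Set.mem_biUnion hr ((hM.2.1 r).1.subset_connIn hz))

theorem eq_of_nonempty_subset (hM : F.MorseDecompIn W le M) {S : Set X} (hS : S.Nonempty)
    {r s : P} (hr : S ⊆ M r) (hs : S ⊆ M s) : r = s := by
  by_contra hne
  obtain ⟨z, hz⟩ := hS
  exact Set.disjoint_left.1 (hM.2.2.1 r s hne) (hr hz) (hs hz)

theorem le_of_meet (hM : F.MorseDecompIn W le M) {φ ψ : ℤ → X} (hφ : F.IsSolIn W φ)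
    (hψ : F.IsSolIn W ψ) {i j : ℤ} (h : φ i = ψ j) {r r' : P} (hα : F.alphaIn W φ ⊆ M r')
    (hω : F.omegaIn W ψ ⊆ M r) : le r r' := by
  have hσ : F.IsSolIn W (splice φ i ψ (j + 1)) :=
    isSolIn_splice (fun k _ => hφ k) hψ (h ▸ hψ j)
  obtain ⟨u, u', hle, hαu, hωu⟩ := hM.2.2.2.1 _ hσ
  rw [alphaIn_splice] at hαu
  rw [omegaIn_splice] at hωu
  rwa [hM.eq_of_nonempty_subset hψ.omegaIn_nonempty hωu hω,
    hM.eq_of_nonempty_subset hφ.alphaIn_nonempty hαu hα] at hle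

theorem notMem_morseSetIn (hM : F.MorseDecompIn W le M) {J : Set P}
    (hJ : ∀ a b, le a b → b ∈ J → a ∈ J) {φ : ℤ → X} (hφ : F.IsSolIn W φ) {z : X} {j : ℤ}
    (hj : φ j = F.star z) {r : P} (hω : F.omegaIn W φ ⊆ M r) (hr : r ∉ J) :
    z ∉ F.MorseSetIn W M J := by
  simp only [MVField.MorseSetIn, Set.mem_iUnion]
  rintro ⟨s, -, s', hs', ψ, hψ, ⟨k, hk⟩, hα, -⟩
  exact hr (hJ r s' (hM.le_of_meet hψ hφ (hk.trans hj.symm) hα hω) hs')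

end MorseDecompIn

end Morse

/-- `Inv (X ∖ M(J))`, the repeller dual to the attractor `M(J)` when `J` is a down-set; its
complement is `N(J)`. -/
def dualRepeller {P : Type*} (M : P → Set X) (J : Set P) : Set X :=
  F.InvPartIn Set.univ (Set.univ \ F.MorseSetIn Set.univ M J)

section DualRepeller

variable {F} {P : Type*} {le : P → P → Prop} {M : P → Set X}

theorem compat_dualRepeller (J : Set P) : F.Compat (F.dualRepeller M J) :=
  F.compat_invPartIn _ _

theorem dualRepeller_anti {J J' : Set P} (h : J ⊆ J') : F.dualRepeller M J' ⊆ F.dualRepeller M J :=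
  F.invPartIn_mono _ (Set.sdiff_subset_sdiff_right (morseSetIn_mono h))

namespace MorseDecompIn

variable [Finite P]

theorem mem_dualRepeller_iff (hM : F.MorseDecompIn Set.univ le M) {J : Set P}
    (hJ : ∀ a b, le a b → b ∈ J → a ∈ J) {x : X} :
    x ∈ F.dualRepeller M J ↔ ∃ (φ : ℤ → X) (r : P), F.IsSolIn Set.univ φ ∧
      (∃ i, φ i = F.star x) ∧ F.omegaIn Set.univ φ ⊆ M r ∧ r ∉ J := by
  have hcompl : F.Compat (Set.univ \ F.MorseSetIn Set.univ M J) :=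
    F.compat_univ.diff (compat_morseSetIn M J)
  constructor
  · rintro ⟨-, φ, hφ, hx, hval⟩
    obtain ⟨r, -, -, -, hω⟩ := hM.2.2.2.1 φ hφ
    refine ⟨φ, r, hφ, hx, hω, fun hr => ?_⟩
    obtain ⟨z, hz⟩ := hφ.omegaIn_nonempty
    have hzJ := omegaIn_subset_of_forall_mem hcompl (fun i => F.lowerC_subset _ (hval i)) hz
    exact hzJ.2 (hM.subset_morseSetIn hr (hω hz))
  · rintro ⟨φ, r, hφ, ⟨i₀, hi₀⟩, hω, hr⟩
    refine ⟨⟨trivial, hM.notMem_morseSetIn hJ hφ hi₀ hω hr⟩, φ, hφ, ⟨i₀, hi₀⟩, fun i => ?_⟩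
    rw [hcompl.lowerC_eq]
    obtain ⟨j, hj⟩ := hφ.exists_eq_star i
    exact ⟨trivial, hM.notMem_morseSetIn hJ hφ hj hω hr⟩

theorem mem_of_notMem_dualRepeller (hM : F.MorseDecompIn Set.univ le M) {J : Set P}
    (hJ : ∀ a b, le a b → b ∈ J → a ∈ J) {x : X} (hx : x ∉ F.dualRepeller M J) ⦃φ : ℤ → X⦄
    (hφ : F.IsSolIn Set.univ φ) ⦃i : ℤ⦄ (hi : φ i = F.star x) ⦃r : P⦄
    (hω : F.omegaIn Set.univ φ ⊆ M r) : r ∈ J :=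
  by_contra fun hr => hx ((hM.mem_dualRepeller_iff hJ).2 ⟨φ, r, hφ, ⟨i, hi⟩, hω, hr⟩)

theorem mem_dualRepeller_of_mem_pi (hM : F.MorseDecompIn Set.univ le M)
    (hX : F.InvariantIn Set.univ Set.univ) {J : Set P} (hJ : ∀ a b, le a b → b ∈ J → a ∈ J)
    {x y : X} (hy : y ∈ F.Pi x) (hyJ : y ∈ F.dualRepeller M J) : x ∈ F.dualRepeller M J := by
  by_cases hxy : y ∈ F.mclass x
  · exact (compat_dualRepeller J).mem_of_mem_mclass hyJ hxy
  have hx : x = F.star x := by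
    by_contra hne
    rw [F.pi_of_ne_star hne, Set.mem_singleton_iff] at hy
    exact hxy (hy ▸ (F.star_spec x).1)
  obtain ⟨-, ρ, hρ, ⟨i₀, hρx⟩, -⟩ : x ∈ F.InvPartIn Set.univ Set.univ := hX.symm ▸ trivial
  obtain ⟨ψ, r, hψ, ⟨j₀, hψy⟩, hω, hr⟩ := (hM.mem_dualRepeller_iff hJ).1 hyJ
  obtain ⟨j, hj⟩ := hψ.exists_mem_piIn hψy
  have hpast : ∀ i < i₀ + 1, Function.update ρ (i₀ + 1) y (i + 1) ∈
      F.PiIn Set.univ (Function.update ρ (i₀ + 1) y i) := by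
    intro i hi
    rcases (Int.lt_add_one_iff.1 hi).lt_or_eq with hi | rfl
    · rw [Function.update_of_ne (by omega), Function.update_of_ne (by omega)]
      exact hρ i
    · rw [Function.update_self, Function.update_of_ne (by omega), hρx, ← hx]
      exact ⟨hy, trivial⟩
  refine (hM.mem_dualRepeller_iff hJ).2 ⟨splice (Function.update ρ (i₀ + 1) y) (i₀ + 1) ψ j, r,
    isSolIn_splice hpast hψ (by rwa [Function.update_self]), ⟨i₀, ?_⟩, by rwa [omegaIn_splice], hr⟩
  rw [splice_of_le (by omega), Function.update_of_ne (by omega), hρx]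

theorem mem_dualRepeller_of_le (hM : F.MorseDecompIn Set.univ le M)
    (hX : F.InvariantIn Set.univ Set.univ) {J : Set P} (hJ : ∀ a b, le a b → b ∈ J → a ∈ J)
    {z a : X} (hle : L.le z a) (hz : z ∈ F.dualRepeller M J) : a ∈ F.dualRepeller M J := by
  induction hle with
  | refl => exact hz
  | @tail b c _ hcb ih =>
    have hQ := compat_dualRepeller (F := F) (M := M) J
    by_cases hbc : b ∈ F.mclass c
    · exact hQ.mem_of_mem_mclass ih hbc
    have hb : L.le b (F.star c) :=
      Relation.ReflTransGen.head hcb ((F.star_spec c).2 c (F.mem_mclass_self c))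
    have hstar := hM.mem_dualRepeller_of_mem_pi hX hJ (F.mem_pi_star_of_le hb hbc) ih
    exact hQ.mem_of_mem_mclass hstar (F.star_spec c).1

theorem closed_compl_dualRepeller (hM : F.MorseDecompIn Set.univ le M)
    (hX : F.InvariantIn Set.univ Set.univ) {J : Set P} (hJ : ∀ a b, le a b → b ∈ J → a ∈ J) :
    L.Closed (Set.univ \ F.dualRepeller M J) := by
  refine Set.Subset.antisymm ?_ fun a ha => ⟨a, ha, Relation.ReflTransGen.refl⟩
  rintro z ⟨a, ha, hle⟩
  exact ⟨trivial, fun hz => ha.2 (hM.mem_dualRepeller_of_le hX hJ hle hz)⟩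

end MorseDecompIn

end DualRepeller

def downClosure {P : Type*} (le : P → P → Prop) (I : Set P) : Set P := {r | ∃ s ∈ I, le r s}

section Convex

variable {F} {P : Type*} {le : P → P → Prop} [IsTrans P le] {M : P → Set X} {I : Set P}

theorem mem_downClosure_of_le {a b : P} (hab : le a b) (hb : b ∈ downClosure le I) :
    a ∈ downClosure le I :=
  let ⟨s, hs, hbs⟩ := hb
  ⟨s, hs, _root_.trans hab hbs⟩

theorem mem_downClosure_diff_of_le (hconv : ∀ r s r', le r s → le s r' → r ∈ I → r' ∈ I → s ∈ I)
    {a b : P} (hab : le a b) (hb : b ∈ downClosure le I \ I) : a ∈ downClosure le I \ I := by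
  obtain ⟨⟨s, hs, hbs⟩, hbI⟩ := hb
  exact ⟨mem_downClosure_of_le hab ⟨s, hs, hbs⟩, fun haI => hbI (hconv a b s hab hbs haI hs)⟩

namespace MorseDecompIn

variable [Finite P]

theorem mem_of_mem_diff_dualRepeller (hM : F.MorseDecompIn Set.univ le M)
    (hconv : ∀ r s r', le r s → le s r' → r ∈ I → r' ∈ I → s ∈ I) {v : P} {z : X} (hz : z ∈ M v)
    (hzD : z ∈ F.dualRepeller M (downClosure le I \ I) \ F.dualRepeller M (downClosure le I)) :
    v ∈ I := by
  have hle := hM.mem_of_notMem_dualRepeller (fun _ _ => mem_downClosure_of_le) hzD.2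
  obtain ⟨σ, hσ, ⟨m, hm⟩, hασ, hωσ⟩ := (hM.2.1 v).1.subset_connIn hz
  obtain ⟨ψ, t, hψ, ⟨j, hj⟩, hωψ, ht⟩ :=
    (hM.mem_dualRepeller_iff fun _ _ => mem_downClosure_diff_of_le hconv).1 hzD.1
  have htI : t ∈ I := by_contra fun htI => ht ⟨hle hψ hj hωψ, htI⟩
  obtain ⟨s, hs, hvs⟩ := hle hσ hm hωσ
  exact hconv t v s (hM.le_of_meet hσ hψ (hm.trans hj.symm) hασ hωψ) hvs htI hs

theorem connIn_subset_diff_dualRepeller (hM : F.MorseDecompIn Set.univ le M)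
    (hconv : ∀ r s r', le r s → le s r' → r ∈ I → r' ∈ I → s ∈ I) {r r' : P} (hr : r ∈ I)
    (hr' : r' ∈ I) : F.ConnIn Set.univ (M r') (M r) ⊆
      F.dualRepeller M (downClosure le I \ I) \ F.dualRepeller M (downClosure le I) := by
  rintro z ⟨φ, hφ, ⟨i, hi⟩, hα, hω⟩
  refine ⟨(hM.mem_dualRepeller_iff fun _ _ => mem_downClosure_diff_of_le hconv).2
    ⟨φ, r, hφ, ⟨i, hi⟩, hω, fun h => h.2 hr⟩, fun hz => ?_⟩
  obtain ⟨ψ, s, hψ, ⟨j, hj⟩, hωψ, hs⟩ :=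
    (hM.mem_dualRepeller_iff fun _ _ => mem_downClosure_of_le).1 hz
  exact hs ⟨r', hr', hM.le_of_meet hφ hψ (hi.trans hj.symm) hα hωψ⟩

theorem morseSetIn_eq_invPartIn (hM : F.MorseDecompIn Set.univ le M)
    (hconv : ∀ r s r', le r s → le s r' → r ∈ I → r' ∈ I → s ∈ I) :
    F.MorseSetIn Set.univ M I = F.InvPartIn Set.univ
      (F.dualRepeller M (downClosure le I \ I) \ F.dualRepeller M (downClosure le I)) := by
  have hD := (compat_dualRepeller (F := F) (M := M) (downClosure le I \ I)).diff
    (compat_dualRepeller (M := M) (downClosure le I))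
  ext x
  simp only [MVField.MorseSetIn, Set.mem_iUnion]
  constructor
  · rintro ⟨r, hr, r', hr', φ, hφ, hx, hα, hω⟩
    have hsub := hM.connIn_subset_diff_dualRepeller hconv hr hr'
    refine ⟨hsub ⟨φ, hφ, hx, hα, hω⟩, φ, hφ, hx, fun i => ?_⟩
    rw [hD.lowerC_eq]
    exact hsub (mem_connIn_of_isSolIn hφ hα hω i)
  · rintro ⟨-, φ, hφ, hx, hval⟩
    have hval' := fun i => F.lowerC_subset _ (hval i)
    obtain ⟨r, r', -, hα, hω⟩ := hM.2.2.2.1 φ hφ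
    obtain ⟨z, hz⟩ := hφ.omegaIn_nonempty
    obtain ⟨z', hz'⟩ := hφ.alphaIn_nonempty
    exact ⟨r, hM.mem_of_mem_diff_dualRepeller hconv (hω hz)
        (omegaIn_subset_of_forall_mem hD hval' hz),
      r', hM.mem_of_mem_diff_dualRepeller hconv (hα hz')
        (alphaIn_subset_of_forall_mem hD hval' hz'), φ, hφ, hx, hα, hω⟩

end MorseDecompIn

end Convex

theorem indexPair_compl {S Q₁ Q₂ : Set X} (h₁ : L.Closed (Set.univ \ Q₁))
    (h₂ : L.Closed (Set.univ \ Q₂)) (h₁₂ : Q₁ ⊆ Q₂)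
    (hQ₁ : ∀ x y, y ∈ F.Pi x → y ∈ Q₁ → x ∈ Q₁) (hQ₂ : ∀ x y, y ∈ F.Pi x → y ∈ Q₂ → x ∈ Q₂)
    (hS : S = F.InvPartIn Set.univ (Q₂ \ Q₁)) :
    F.IndexPair S (Set.univ \ Q₁) (Set.univ \ Q₂) := by
  refine ⟨h₁, h₂, Set.sdiff_subset_sdiff_right h₁₂,
    fun x hx y hy _ => ⟨trivial, fun hyQ => hx.2 (hQ₂ x y hy hyQ)⟩,
    fun x hx ⟨y, hy, hyQ⟩ => absurd ⟨trivial, fun h => hx.2 (hQ₁ x y hy h)⟩ hyQ, ?_⟩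
  rw [hS]
  congr 1
  ext x
  simp [and_comm]

end MVField

end CMVF

open CMVF

variable {R : Type*} [Ring R] {X : Type*} [Fintype X]

/-- Theorem: for a convex `I ⊆ ℙ`, with `I^≤ := {r | ∃ s ∈ I, r ≤ s}`, `I^< := I^≤ ∖ I`
and `N(J) := X ∖ Inv(X ∖ M(J))`, the pair `(N(I^≤), N(I^<))` is an index pair for `M(I)`. -/
theorem morse_set_index_pair (L : Lefschetz R X) (F : MVField L)
    (hX : F.InvariantIn Set.univ Set.univ)
    {P : Type*} [Finite P] (le : P → P → Prop) (M : P → Set X)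
    (hM : F.MorseDecompIn Set.univ le M) (I : Set P)
    (hconv : ∀ r s r', le r s → le s r' → r ∈ I → r' ∈ I → s ∈ I) :
    F.IndexPair (F.MorseSetIn Set.univ M I)
      (Set.univ \ F.InvPartIn Set.univ
        (Set.univ \ F.MorseSetIn Set.univ M {r | ∃ s ∈ I, le r s}))
      (Set.univ \ F.InvPartIn Set.univ
        (Set.univ \ F.MorseSetIn Set.univ M ({r | ∃ s ∈ I, le r s} \ I))) := by
  have : IsPartialOrder P le := hM.1
  have hle : ∀ a b, le a b → b ∈ MVField.downClosure le I → a ∈ MVField.downClosure le I :=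
    fun _ _ => MVField.mem_downClosure_of_le
  have hlt : ∀ a b, le a b → b ∈ MVField.downClosure le I \ I → a ∈ MVField.downClosure le I \ I :=
    fun _ _ => MVField.mem_downClosure_diff_of_le hconv
  exact F.indexPair_compl (hM.closed_compl_dualRepeller hX hle)
    (hM.closed_compl_dualRepeller hX hlt) (MVField.dualRepeller_anti Set.sdiff_subset)
    (fun _ _ => hM.mem_dualRepeller_of_mem_pi hX hle)
    (fun _ _ => hM.mem_dualRepeller_of_mem_pi hX hlt) (hM.morseSetIn_eq_invPartIn hconv)
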